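/- Let 𝒢₆ ⊆ GF(4)⁶ be the hexacode, the GF(4)-linear span of (1,0,0,1,ω,ω), (0,1,0,ω,1,ω), (0,0,1,ω,ω,1). For every coordinate j ∈ {0, …, 5} and every nonzero a ∈ GF(4): exactly 10 codewords c ∈ 𝒢₆ satisfy wt(c) = 4 and c_j = a, and exactly 6 codewords c ∈ 𝒢₆ satisfy wt(c) = 6 and c_j = a. (That is, the codewords of each nonzero weight of 𝒢₆ form generalized 1-designs of type 3, with μ(4, e1) = 10 and μ(6, e1) = 6 for every weight-1 vector e1.) -/

import Mathlib

/-!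
Since `1, ω` is a basis of `GF(4)` over `GF(2)`, the map `(u, v) ↦ u + v ω` identifies
`ZMod 2 × ZMod 2` with `GF(4)`, and `ω² = ω + 1` makes the multiplication explicit. This
identification carries the 64 coefficient triples bijectively onto the hexacode, preserving
weights and coordinates, so both counts become a finite computation over 64 codewords with
coordinates in `ZMod 2 × ZMod 2`, which `decide` performs.
-/

/-- `GF(4)`, the field with 4 elements. -/
abbrev F4 := GaloisField 2 2

/-- The trace map `Tr : GF(4) → GF(2)`, `Tr(x) = x + x²` (valued in the prime subfield). -/
noncomputable def tr (x : F4) : F4 := x + x ^ 2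

/-- The conjugate `ȳ = y²` of an element of `GF(4)`. -/
noncomputable def conj (x : F4) : F4 := x ^ 2

/-- The Hamming weight: the number of nonzero coordinates. -/
noncomputable def wt {n : ℕ} (c : Fin n → F4) : ℕ := {i | c i ≠ 0}.ncard

/-- The hexacode: the `GF(4)`-linear span of `(1,0,0,1,ω,ω)`, `(0,1,0,ω,1,ω)`,
`(0,0,1,ω,ω,1)`. -/
noncomputable def hexacode (ω : F4) : Submodule F4 (Fin 6 → F4) :=
  Submodule.span F4 {![1,0,0,1,ω,ω], ![0,1,0,ω,1,ω], ![0,0,1,ω,ω,1]}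

open Finset

lemma mem_hexacode_iff {ω : F4} {c : Fin 6 → F4} :
    c ∈ hexacode ω ↔
      ∃ x y z : F4, x • ![1,0,0,1,ω,ω] + y • ![0,1,0,ω,1,ω] + z • ![0,0,1,ω,ω,1] = c :=
  Submodule.mem_span_triple

/-- `(u, v)` stands for `u + v ω`; the product below is the one forced by `ω² = ω + 1`. -/
abbrev F4Model := ZMod 2 × ZMod 2

namespace F4Model

def mul (a b : F4Model) : F4Model :=
  (a.1 * b.1 + a.2 * b.2, a.1 * b.2 + a.2 * b.1 + a.2 * b.2)

section Embedding

variable {R : Type*} [CommRing R] [CharP R 2] {ω : R}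

noncomputable def toRing (ω : R) (a : F4Model) : R :=
  ZMod.castHom (dvd_refl 2) R a.1 + ZMod.castHom (dvd_refl 2) R a.2 * ω

@[simp] lemma toRing_zero : toRing ω 0 = 0 := by simp [toRing]

@[simp] lemma toRing_one_zero : toRing ω (1, 0) = 1 := by simp [toRing]

@[simp] lemma toRing_zero_one : toRing ω (0, 1) = ω := by simp [toRing]

lemma toRing_add (a b : F4Model) : toRing ω (a + b) = toRing ω a + toRing ω b := by
  simp only [toRing, Prod.fst_add, Prod.snd_add, map_add]; ring

lemma toRing_sub (a b : F4Model) : toRing ω (a - b) = toRing ω a - toRing ω b := by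
  simp only [toRing, Prod.fst_sub, Prod.snd_sub, map_sub]; ring

lemma toRing_mul (hω : ω ^ 2 = ω + 1) (a b : F4Model) :
    toRing ω (mul a b) = toRing ω a * toRing ω b := by
  simp only [toRing, mul, map_add, map_mul]
  linear_combination (-(ZMod.castHom (dvd_refl 2) R a.2 * ZMod.castHom (dvd_refl 2) R b.2)) * hω

lemma toRing_injective [Nontrivial R] (hω : ω ^ 2 = ω + 1) : Function.Injective (toRing ω) := by
  have h2 : (2 : R) = 0 := CharTwo.two_eq_zero
  have hω0 : ω ≠ 0 := fun h => one_ne_zero (α := R) (by rw [h] at hω; linear_combination -hω)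
  have hω1 : ω + 1 ≠ 0 := fun h => one_ne_zero (α := R) (by
    linear_combination ω * h - hω - ω * h2)
  have ker : ∀ a : F4Model, toRing ω a = 0 → a = 0 := by
    have zmod_two : ∀ u : ZMod 2, u = 0 ∨ u = 1 := by decide
    rintro ⟨u, v⟩ h
    rcases zmod_two u with rfl | rfl <;> rcases zmod_two v with rfl | rfl <;>
      simp [toRing] at h ⊢
    · exact hω0 h
    · exact hω1 (by rwa [add_comm])
  intro a b h
  exact sub_eq_zero.1 (ker _ (by rw [toRing_sub, h, sub_self]))

end Embedding

lemma toRing_bijective {ω : F4} (hω : ω ^ 2 = ω + 1) : Function.Bijective (toRing ω) :=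
  (toRing_injective hω).bijective_of_nat_card_le (by simp [GaloisField.card 2 2 two_ne_zero])

/-- Coefficients `(x, y, z)` give `x g₁ + y g₂ + z g₃` for the three generators of `hexacode`. -/
def codeword (p : F4Model × F4Model × F4Model) : Fin 6 → F4Model := fun i =>
  mul p.1 (![(1,0), 0, 0, (1,0), (0,1), (0,1)] i) +
    mul p.2.1 (![0, (1,0), 0, (0,1), (1,0), (0,1)] i) +
    mul p.2.2 (![0, 0, (1,0), (0,1), (0,1), (1,0)] i)

def weight (w : Fin 6 → F4Model) : ℕ := #{i | w i ≠ 0}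

lemma codeword_injective : Function.Injective codeword := by
  intro p q h
  have h0 := congrFun h 0
  have h1 := congrFun h 1
  have h2 := congrFun h 2
  simp only [codeword, mul, Matrix.cons_val_zero, Matrix.cons_val_one, Matrix.cons_val,
    mul_one, mul_zero, add_zero, zero_add, Prod.mk.eta, Prod.fst_zero, Prod.snd_zero,
    Prod.mk_add_mk, add_left_inj, add_right_inj] at h0 h1 h2
  exact Prod.ext h0 (Prod.ext h1 h2)

lemma toRing_codeword {ω : F4} (hω : ω ^ 2 = ω + 1) (p : F4Model × F4Model × F4Model) :
    toRing ω ∘ codeword p =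
      toRing ω p.1 • ![1,0,0,1,ω,ω] + toRing ω p.2.1 • ![0,1,0,ω,1,ω] +
        toRing ω p.2.2 • ![0,0,1,ω,ω,1] := by
  funext i
  fin_cases i <;> simp [codeword, toRing_add, toRing_mul hω]

lemma hexacode_eq_range {ω : F4} (hω : ω ^ 2 = ω + 1) :
    (hexacode ω : Set (Fin 6 → F4)) = Set.range fun p => toRing ω ∘ codeword p := by
  ext c
  rw [SetLike.mem_coe, mem_hexacode_iff]
  constructor
  · rintro ⟨x, y, z, rfl⟩
    obtain ⟨p₁, rfl⟩ := (toRing_bijective hω).surjective x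
    obtain ⟨p₂, rfl⟩ := (toRing_bijective hω).surjective y
    obtain ⟨p₃, rfl⟩ := (toRing_bijective hω).surjective z
    exact ⟨(p₁, p₂, p₃), toRing_codeword hω _⟩
  · rintro ⟨p, rfl⟩
    exact ⟨_, _, _, (toRing_codeword hω p).symm⟩

lemma weight_eq_wt {ω : F4} (hω : ω ^ 2 = ω + 1) (w : Fin 6 → F4Model) :
    wt (toRing ω ∘ w) = weight w := by
  rw [wt, weight, ← Set.ncard_coe_finset]
  congr 1
  ext i
  simp only [Function.comp_apply, ne_eq, Set.mem_ofPred_eq, coe_filter, mem_univ, true_and]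
  exact ((toRing_injective hω).eq_iff' toRing_zero).not

lemma ncard_hexacode_eq_card {ω : F4} (hω : ω ^ 2 = ω + 1) (k : ℕ) (j : Fin 6) (b : F4Model) :
    {c : Fin 6 → F4 | c ∈ hexacode ω ∧ wt c = k ∧ c j = toRing ω b}.ncard =
      #{p | weight (codeword p) = k ∧ codeword p j = b} := by
  have hinj : Function.Injective fun p => toRing ω ∘ codeword p :=
    fun p q h => codeword_injective (((toRing_injective hω).comp_left) h)
  rw [← Set.ncard_coe_finset, ← Set.ncard_image_of_injective _ hinj]
  congr 1
  ext c
  simp only [Set.mem_ofPred_eq, Set.mem_image, coe_filter, mem_univ, true_and]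
  constructor
  · rintro ⟨hc, hwt, hcj⟩
    obtain ⟨p, rfl⟩ : c ∈ Set.range fun p => toRing ω ∘ codeword p :=
      hexacode_eq_range hω ▸ hc
    exact ⟨p, ⟨weight_eq_wt hω _ ▸ hwt, toRing_injective hω hcj⟩, rfl⟩
  · rintro ⟨p, ⟨hwt, hcj⟩, rfl⟩
    refine ⟨?_, by rw [weight_eq_wt hω, hwt], by rw [Function.comp_apply, hcj]⟩
    rw [← SetLike.mem_coe, hexacode_eq_range hω]
    exact ⟨p, rfl⟩

set_option maxRecDepth 10000 in
lemma card_codeword_weight_four (j : Fin 6) (b : F4Model) (hb : b ≠ 0) :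
    #{p | weight (codeword p) = 4 ∧ codeword p j = b} = 10 := by
  revert j b; decide

set_option maxRecDepth 10000 in
lemma card_codeword_weight_six (j : Fin 6) (b : F4Model) (hb : b ≠ 0) :
    #{p | weight (codeword p) = 6 ∧ codeword p j = b} = 6 := by
  revert j b; decide

end F4Model

/-- The codewords of each nonzero weight of the hexacode form generalized 1-designs of
type 3: for every coordinate `j` and every nonzero `a ∈ GF(4)`, exactly 10 codewords of
weight 4 and exactly 6 codewords of weight 6 have `c j = a`. -/
theorem hexacode_generalized_one_design (ω : F4) (hω : ω ^ 2 = ω + 1)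
    (j : Fin 6) (a : F4) (ha : a ≠ 0) :
    {c : Fin 6 → F4 | c ∈ hexacode ω ∧ wt c = 4 ∧ c j = a}.ncard = 10 ∧
    {c : Fin 6 → F4 | c ∈ hexacode ω ∧ wt c = 6 ∧ c j = a}.ncard = 6 := by
  obtain ⟨b, rfl⟩ := (F4Model.toRing_bijective hω).surjective a
  have hb : b ≠ 0 := by rintro rfl; exact ha F4Model.toRing_zero
  rw [F4Model.ncard_hexacode_eq_card hω, F4Model.ncard_hexacode_eq_card hω]
  exact ⟨F4Model.card_codeword_weight_four j b hb, F4Model.card_codeword_weight_six j b hb⟩
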